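/- (Combined cost-and-measurement-noise concentration.) Under L noisy layers with unitary-interleaved Pauli noise of strength q acting on a pure n-qubit input state, and additionally local symmetric bit-flip measurement noise with parameter q_M, for an observable O = Σᵢωᵢσᵢ (no identity component) with N_O nonzero coefficients and minimum Pauli weight w, the noisy cost satisfies |C̃ − Tr[O]/2ⁿ| ≤ q_M^{w} · N_O ‖ω⃗‖∞ · 2^{n/2} q^{L+1}. -/

import Mathlib

open Matrix BigOperators ComplexOrder

/-! The squared norm `‖a⃗‖² = Σᵢ |Tr(σᵢ ρ)|² = d·Tr(ρᴴρ) − |Tr ρ|²` of the Pauli coefficients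
(Parseval for the trace-orthogonal basis `{1, σᵢ}` of all `d × d` matrices) is invariant under
unitary conjugation, and a Pauli noise layer, which scales `Tr(σᵢ ρ)` by `cᵢ`, contracts it by
`q²`. A pure input starts at `d − 1`, so after the `L + 1` noise layers every coefficient obeys
`|Tr(σᵢ ρ)| ≤ q^{L+1} √d`. Since `Tr O = 0` and `Tr(Õ ρ) = Σᵢ q_M^{w(i)} ωᵢ Tr(σᵢ ρ)`, summing
over the `N_O` nonzero `ωᵢ` gives the bound. -/

/-- The output of a noisy layered circuit: the noise channel `Nc` is applied
before and after each unitary layer, i.e. `𝒩 ∘ 𝒰_L ∘ ⋯ ∘ 𝒩 ∘ 𝒰_1 ∘ 𝒩`. -/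
noncomputable def runCircuit {d : ℕ}
    (Nc : Matrix (Fin d) (Fin d) ℂ →ₗ[ℂ] Matrix (Fin d) (Fin d) ℂ)
    (Us : List (Matrix (Fin d) (Fin d) ℂ)) (ρ : Matrix (Fin d) (Fin d) ℂ) :
    Matrix (Fin d) (Fin d) ℂ :=
  Us.foldl (fun s V => Nc (V * s * Vᴴ)) (Nc ρ)

section TraceOrthogonal

variable {d : ℕ} {κ : Type*} [Fintype κ] [DecidableEq κ] {B : κ → Matrix (Fin d) (Fin d) ℂ}

theorem trace_mul_sum_smul_of_orthogonal
    (horth : ∀ a b, (B a * B b).trace = if a = b then (d : ℂ) else 0) (u : κ → ℂ) (a : κ) :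
    (B a * ∑ b, u b • B b).trace = d * u a := by
  simp [Finset.mul_sum, Matrix.trace_sum, horth, mul_comm]

theorem linearIndependent_of_trace_orthogonal [NeZero d]
    (horth : ∀ a b, (B a * B b).trace = if a = b then (d : ℂ) else 0) :
    LinearIndependent ℂ B := by
  refine Fintype.linearIndependent_iff.mpr fun u hu a => ?_
  have := trace_mul_sum_smul_of_orthogonal horth u a
  rw [hu, Matrix.mul_zero, Matrix.trace_zero, eq_comm, mul_eq_zero] at this
  exact this.resolve_left (NeZero.ne _)

theorem sum_trace_mul_smul_of_orthogonal [NeZero d]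
    (horth : ∀ a b, (B a * B b).trace = if a = b then (d : ℂ) else 0)
    (hcard : Fintype.card κ = d * d) (X : Matrix (Fin d) (Fin d) ℂ) :
    ∑ a, ((B a * X).trace / d) • B a = X := by
  let b := basisOfLinearIndependentOfCardEqFinrank' B
    (linearIndependent_of_trace_orthogonal horth) (by simp [Module.finrank_matrix, hcard])
  have hb : ⇑b = B := coe_basisOfLinearIndependentOfCardEqFinrank' ..
  have hX := b.sum_repr X
  rw [hb] at hX
  conv_lhs => rw [← hX]
  simp_rw [trace_mul_sum_smul_of_orthogonal horth, mul_div_cancel_left₀ _ (NeZero.ne (d : ℂ))]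
  exact hX

theorem trace_conjTranspose_mul_sum_smul_of_orthogonal (hherm : ∀ a, (B a).IsHermitian)
    (horth : ∀ a b, (B a * B b).trace = if a = b then (d : ℂ) else 0) (u v : κ → ℂ) :
    ((∑ a, u a • B a)ᴴ * ∑ b, v b • B b).trace = d * ∑ a, star (u a) * v a := by
  have hstar : (∑ a, u a • B a)ᴴ = ∑ a, star (u a) • B a := by
    simp [Matrix.conjTranspose_sum, (hherm _).eq]
  rw [hstar, Finset.sum_mul, Matrix.trace_sum, Finset.mul_sum]
  simp_rw [smul_mul_assoc, Matrix.trace_smul, trace_mul_sum_smul_of_orthogonal horth, smul_eq_mul]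
  exact Finset.sum_congr rfl fun a _ => by ring

theorem sum_normSq_trace_mul_of_orthogonal [NeZero d] (hherm : ∀ a, (B a).IsHermitian)
    (horth : ∀ a b, (B a * B b).trace = if a = b then (d : ℂ) else 0)
    (hcard : Fintype.card κ = d * d) (X : Matrix (Fin d) (Fin d) ℂ) :
    ∑ a, (Complex.normSq (B a * X).trace : ℂ) = d * (Xᴴ * X).trace := by
  conv_rhs => rw [← sum_trace_mul_smul_of_orthogonal horth hcard X,
    trace_conjTranspose_mul_sum_smul_of_orthogonal hherm horth]
  simp_rw [Complex.normSq_eq_conj_mul_self, Finset.mul_sum, star_div₀, star_natCast,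
    Complex.star_def]
  refine Finset.sum_congr rfl fun a _ => ?_
  field_simp [NeZero.ne (d : ℂ)]

end TraceOrthogonal

theorem trace_unitary_conj {m : Type*} [Fintype m] [DecidableEq m] {V : Matrix m m ℂ}
    (hV : V ∈ Matrix.unitaryGroup m ℂ) (X : Matrix m m ℂ) : (V * X * Vᴴ).trace = X.trace := by
  rw [Matrix.trace_mul_cycle, ← Matrix.star_eq_conjTranspose,
    Matrix.UnitaryGroup.star_mul_self ⟨V, hV⟩, Matrix.one_mul]

theorem foldl_le_pow_length_mul {α β : Type*} (g : α → ℝ) (f : α → β → α) {r : ℝ} (hr : 0 ≤ r)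
    (l : List β) (hf : ∀ b ∈ l, ∀ s, g (f s b) ≤ r * g s) (s : α) :
    g (l.foldl f s) ≤ r ^ l.length * g s := by
  induction l generalizing s with
  | nil => simp
  | cons b l ih =>
    calc g ((b :: l).foldl f s) ≤ r ^ l.length * g (f s b) :=
          ih (fun b' hb' => hf b' (List.mem_cons_of_mem _ hb')) _
      _ ≤ r ^ l.length * (r * g s) :=
          mul_le_mul_of_nonneg_left (hf b List.mem_cons_self s) (pow_nonneg hr _)
      _ = r ^ (b :: l).length * g s := by rw [List.length_cons, pow_succ, mul_assoc]

section Pauli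

variable {d : ℕ} {ι : Type*} {σ : ι → Matrix (Fin d) (Fin d) ℂ}

def withIdentity (σ : ι → Matrix (Fin d) (Fin d) ℂ) (o : Option ι) : Matrix (Fin d) (Fin d) ℂ :=
  o.elim 1 σ

theorem isHermitian_withIdentity (hherm : ∀ i, (σ i).IsHermitian) (o : Option ι) :
    (withIdentity σ o).IsHermitian := by
  cases o with
  | none => exact Matrix.isHermitian_one
  | some i => exact hherm i

theorem trace_mul_withIdentity [DecidableEq ι] (htraceless : ∀ i, (σ i).trace = 0)
    (horth : ∀ i j, (σ i * σ j).trace = if i = j then (d : ℂ) else 0) (o o' : Option ι) :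
    (withIdentity σ o * withIdentity σ o').trace = if o = o' then (d : ℂ) else 0 := by
  cases o <;> cases o' <;> simp [withIdentity, htraceless, horth]

variable [Fintype ι]

def pauliNormSq (σ : ι → Matrix (Fin d) (Fin d) ℂ) (X : Matrix (Fin d) (Fin d) ℂ) : ℝ :=
  ∑ i, Complex.normSq (σ i * X).trace

theorem norm_trace_mul_le_sqrt_pauliNormSq (X : Matrix (Fin d) (Fin d) ℂ) (i : ι) :
    ‖(σ i * X).trace‖ ≤ Real.sqrt (pauliNormSq σ X) :=
  Real.sqrt_le_sqrt <| Finset.single_le_sum (fun j _ => Complex.normSq_nonneg (σ j * X).trace)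
    (Finset.mem_univ i)

variable [DecidableEq ι] [NeZero d]

theorem pauliNormSq_eq (hherm : ∀ i, (σ i).IsHermitian) (htraceless : ∀ i, (σ i).trace = 0)
    (horth : ∀ i j, (σ i * σ j).trace = if i = j then (d : ℂ) else 0)
    (hcard : Fintype.card ι + 1 = d * d) (X : Matrix (Fin d) (Fin d) ℂ) :
    (pauliNormSq σ X : ℂ) = d * (Xᴴ * X).trace - Complex.normSq X.trace := by
  rw [← sum_normSq_trace_mul_of_orthogonal (isHermitian_withIdentity hherm)
    (trace_mul_withIdentity htraceless horth) (by simpa using hcard), Fintype.sum_option]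
  simp [pauliNormSq, withIdentity]

theorem pauliNormSq_unitary_conj (hherm : ∀ i, (σ i).IsHermitian)
    (htraceless : ∀ i, (σ i).trace = 0)
    (horth : ∀ i j, (σ i * σ j).trace = if i = j then (d : ℂ) else 0)
    (hcard : Fintype.card ι + 1 = d * d) {V : Matrix (Fin d) (Fin d) ℂ}
    (hV : V ∈ Matrix.unitaryGroup (Fin d) ℂ) (X : Matrix (Fin d) (Fin d) ℂ) :
    pauliNormSq σ (V * X * Vᴴ) = pauliNormSq σ X := by
  have hVV : Vᴴ * V = 1 := Matrix.UnitaryGroup.star_mul_self ⟨V, hV⟩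
  have hsq : (V * X * Vᴴ)ᴴ * (V * X * Vᴴ) = V * (Xᴴ * X) * Vᴴ := by
    simp only [Matrix.conjTranspose_mul, Matrix.conjTranspose_conjTranspose, Matrix.mul_assoc,
      ← Matrix.mul_assoc Vᴴ V, hVV, Matrix.one_mul]
  apply Complex.ofReal_injective
  rw [pauliNormSq_eq hherm htraceless horth hcard, pauliNormSq_eq hherm htraceless horth hcard,
    hsq, trace_unitary_conj hV, trace_unitary_conj hV]

theorem pauliNormSq_of_pure (hherm : ∀ i, (σ i).IsHermitian) (htraceless : ∀ i, (σ i).trace = 0)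
    (horth : ∀ i j, (σ i * σ j).trace = if i = j then (d : ℂ) else 0)
    (hcard : Fintype.card ι + 1 = d * d) {ρ : Matrix (Fin d) (Fin d) ℂ} (hρ : ρ.IsHermitian)
    (htr : ρ.trace = 1) (hpure : (ρ * ρ).trace = 1) :
    pauliNormSq σ ρ = d - 1 := by
  apply Complex.ofReal_injective
  rw [pauliNormSq_eq hherm htraceless horth hcard, hρ.eq, hpure, htr]
  simp

theorem trace_mul_apply_of_pauli_diagonal (htraceless : ∀ i, (σ i).trace = 0)
    (horth : ∀ i j, (σ i * σ j).trace = if i = j then (d : ℂ) else 0)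
    (hcard : Fintype.card ι + 1 = d * d)
    {Nc : Matrix (Fin d) (Fin d) ℂ →ₗ[ℂ] Matrix (Fin d) (Fin d) ℂ} {c : ι → ℂ}
    (hN1 : Nc 1 = 1) (hNσ : ∀ i, Nc (σ i) = c i • σ i) (X : Matrix (Fin d) (Fin d) ℂ) (i : ι) :
    (σ i * Nc X).trace = c i * (σ i * X).trace := by
  have horth' := trace_mul_withIdentity htraceless horth
  set u : Option ι → ℂ := fun o => (withIdentity σ o * X).trace / d
  have hX : ∑ o, u o • withIdentity σ o = X :=
    sum_trace_mul_smul_of_orthogonal horth' (by simpa using hcard) X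
  have hNX : Nc X = ∑ o, (u o * o.elim 1 c) • withIdentity σ o := by
    conv_lhs => rw [← hX]
    rw [map_sum]
    refine Finset.sum_congr rfl fun o _ => ?_
    cases o with
    | none => simp [withIdentity, hN1]
    | some j => rw [map_smul, mul_smul]; exact congrArg _ (hNσ j)
  calc (σ i * Nc X).trace = d * (u (some i) * c i) := by
        rw [hNX]; exact trace_mul_sum_smul_of_orthogonal horth' _ (some i)
    _ = c i * (d * u (some i)) := by ring
    _ = c i * (σ i * X).trace := by
        rw [← trace_mul_sum_smul_of_orthogonal horth' u (some i), hX]; rfl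

end Pauli

section Noise

variable {d : ℕ} {ι : Type*} [Fintype ι] [DecidableEq ι] [NeZero d]
  {σ : ι → Matrix (Fin d) (Fin d) ℂ} {Nc : Matrix (Fin d) (Fin d) ℂ →ₗ[ℂ] Matrix (Fin d) (Fin d) ℂ}
  {c : ι → ℂ} {q : ℝ}

theorem pauliNormSq_map_le (htraceless : ∀ i, (σ i).trace = 0)
    (horth : ∀ i j, (σ i * σ j).trace = if i = j then (d : ℂ) else 0)
    (hcard : Fintype.card ι + 1 = d * d) (hN1 : Nc 1 = 1) (hNσ : ∀ i, Nc (σ i) = c i • σ i)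
    (hc : ∀ i, ‖c i‖ ≤ q) (X : Matrix (Fin d) (Fin d) ℂ) :
    pauliNormSq σ (Nc X) ≤ q ^ 2 * pauliNormSq σ X := by
  rw [pauliNormSq, pauliNormSq, Finset.mul_sum]
  refine Finset.sum_le_sum fun i _ => ?_
  rw [trace_mul_apply_of_pauli_diagonal htraceless horth hcard hN1 hNσ, Complex.normSq_mul,
    Complex.normSq_eq_norm_sq (c i)]
  exact mul_le_mul_of_nonneg_right (pow_le_pow_left₀ (norm_nonneg _) (hc i) 2)
    (Complex.normSq_nonneg _)

theorem pauliNormSq_runCircuit_le (hherm : ∀ i, (σ i).IsHermitian)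
    (htraceless : ∀ i, (σ i).trace = 0)
    (horth : ∀ i j, (σ i * σ j).trace = if i = j then (d : ℂ) else 0)
    (hcard : Fintype.card ι + 1 = d * d) (hN1 : Nc 1 = 1) (hNσ : ∀ i, Nc (σ i) = c i • σ i)
    (hc : ∀ i, ‖c i‖ ≤ q) {Us : List (Matrix (Fin d) (Fin d) ℂ)}
    (hUs : ∀ V ∈ Us, V ∈ Matrix.unitaryGroup (Fin d) ℂ) (ρ : Matrix (Fin d) (Fin d) ℂ) :
    pauliNormSq σ (runCircuit Nc Us ρ) ≤ (q ^ 2) ^ (Us.length + 1) * pauliNormSq σ ρ := by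
  have hmap := pauliNormSq_map_le htraceless horth hcard hN1 hNσ hc
  have hlayer : ∀ V ∈ Us, ∀ s, pauliNormSq σ (Nc (V * s * Vᴴ)) ≤ q ^ 2 * pauliNormSq σ s :=
    fun V hV s => (hmap _).trans_eq <| by
      rw [pauliNormSq_unitary_conj hherm htraceless horth hcard (hUs V hV)]
  calc pauliNormSq σ (runCircuit Nc Us ρ)
      ≤ (q ^ 2) ^ Us.length * pauliNormSq σ (Nc ρ) :=
        foldl_le_pow_length_mul _ _ (sq_nonneg q) Us hlayer _
    _ ≤ (q ^ 2) ^ Us.length * (q ^ 2 * pauliNormSq σ ρ) := by gcongr; exact hmap ρ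
    _ = (q ^ 2) ^ (Us.length + 1) * pauliNormSq σ ρ := by ring

end Noise

theorem norm_sum_damped_le {ι : Type*} [Fintype ι] {qM : ℝ} (hqM0 : 0 ≤ qM) (hqM1 : qM ≤ 1)
    {w : ι → ℕ} {wmin : ℕ} {ω : ι → ℝ} (hw : ∀ i, ω i ≠ 0 → wmin ≤ w i) {a : ι → ℂ} {A : ℝ}
    (ha : ∀ i, ‖a i‖ ≤ A) :
    ‖∑ i, ((qM ^ w i * ω i : ℝ) : ℂ) * a i‖
      ≤ qM ^ wmin * ((Finset.univ.filter fun i => ω i ≠ 0).card : ℝ) * (⨆ i, |ω i|) * A := by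
  classical
  set S := Finset.univ.filter fun i => ω i ≠ 0
  have hsupp : ∑ i ∈ S, ((qM ^ w i * ω i : ℝ) : ℂ) * a i = ∑ i, ((qM ^ w i * ω i : ℝ) : ℂ) * a i :=
    Finset.sum_filter_of_ne fun i _ hi h0 => hi (by simp [h0])
  have hterm : ∀ i ∈ S, ‖((qM ^ w i * ω i : ℝ) : ℂ) * a i‖ ≤ qM ^ wmin * (⨆ i, |ω i|) * A := by
    intro i hi
    have hωi : ω i ≠ 0 := (Finset.mem_filter.mp hi).2
    have hsup : |ω i| ≤ ⨆ j, |ω j| := le_ciSup (f := fun j => |ω j|) (Set.finite_range _).bddAbove i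
    rw [norm_mul, Complex.norm_real, Real.norm_eq_abs, abs_mul, abs_of_nonneg (by positivity)]
    have hdamp : qM ^ w i * |ω i| ≤ qM ^ wmin * ⨆ j, |ω j| :=
      mul_le_mul (pow_le_pow_of_le_one hqM0 hqM1 (hw i hωi)) hsup (abs_nonneg _) (by positivity)
    exact mul_le_mul hdamp (ha i) (norm_nonneg _)
      (mul_nonneg (by positivity) ((abs_nonneg _).trans hsup))
  calc ‖∑ i, ((qM ^ w i * ω i : ℝ) : ℂ) * a i‖
      ≤ ∑ i ∈ S, ‖((qM ^ w i * ω i : ℝ) : ℂ) * a i‖ := hsupp ▸ norm_sum_le _ _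
    _ ≤ ∑ _i ∈ S, qM ^ wmin * (⨆ i, |ω i|) * A := Finset.sum_le_sum hterm
    _ = qM ^ wmin * (S.card : ℝ) * (⨆ i, |ω i|) * A := by rw [Finset.sum_const, nsmul_eq_mul]; ring

theorem stmt_15_general {n : ℕ} {ι : Type*} [Fintype ι] [DecidableEq ι]
    (hcard : Fintype.card ι = 4^n - 1)
    (σ : ι → Matrix (Fin (2^n)) (Fin (2^n)) ℂ)
    (hherm : ∀ i, (σ i).IsHermitian)
    (htraceless : ∀ i, (σ i).trace = 0)
    (horth : ∀ i j, (σ i * σ j).trace = if i = j then ((2^n : ℕ) : ℂ) else 0)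
    (q : ℝ) (hq0 : 0 ≤ q)
    (Nc : Matrix (Fin (2^n)) (Fin (2^n)) ℂ →ₗ[ℂ] Matrix (Fin (2^n)) (Fin (2^n)) ℂ)
    (c : ι → ℝ) (hN1 : Nc 1 = 1) (hNσ : ∀ i, Nc (σ i) = (c i : ℂ) • σ i)
    (hc : ∀ i, |c i| ≤ q)
    (Us : List (Matrix (Fin (2^n)) (Fin (2^n)) ℂ))
    (hUs : ∀ V ∈ Us, V ∈ Matrix.unitaryGroup (Fin (2^n)) ℂ)
    (ρ₀ : Matrix (Fin (2^n)) (Fin (2^n)) ℂ)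
    (hρ₀psd : ρ₀.PosSemidef) (hρ₀tr : ρ₀.trace = 1)
    (hρ₀pure : (ρ₀ * ρ₀).trace = 1)
    -- measurement noise: each Pauli coefficient `ωᵢ` of the observable is
    -- multiplied by `q_M^{w i}` where `w i` is the weight of the string
    (qM : ℝ) (hqM0 : 0 ≤ qM) (hqM1 : qM ≤ 1)
    (w : ι → ℕ) (wmin : ℕ)
    (ω : ι → ℝ) (hwsupp : ∀ i, ω i ≠ 0 → wmin ≤ w i)
    (O Otilde : Matrix (Fin (2^n)) (Fin (2^n)) ℂ)
    (hO : O = ∑ i, (ω i : ℂ) • σ i)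
    (hOtilde : Otilde = ∑ i, ((qM ^ (w i) * ω i : ℝ) : ℂ) • σ i) :
    ‖(Otilde * runCircuit Nc Us ρ₀).trace - O.trace / ((2^n : ℕ) : ℂ)‖
      ≤ qM ^ wmin * ((Finset.univ.filter (fun i => ω i ≠ 0)).card : ℝ)
        * (⨆ i, |ω i|) * Real.sqrt (2^n) * q ^ (Us.length + 1) := by
  have hcard' : Fintype.card ι + 1 = 2 ^ n * 2 ^ n := by
    rw [hcard, ← mul_pow]
    norm_num
    have := Nat.one_le_pow n 4 (by norm_num)
    omega
  set ρ := runCircuit Nc Us ρ₀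
  have hpurity : pauliNormSq σ ρ ≤ (q ^ 2) ^ (Us.length + 1) * (2 ^ n - 1) := by
    have := pauliNormSq_runCircuit_le hherm htraceless horth hcard' hN1 hNσ
      (fun i => (Complex.norm_real (c i)).trans_le (hc i)) hUs ρ₀
    rwa [pauliNormSq_of_pure hherm htraceless horth hcard' hρ₀psd.isHermitian hρ₀tr hρ₀pure,
      Nat.cast_pow, Nat.cast_ofNat] at this
  have hcoeff : ∀ i, ‖(σ i * ρ).trace‖ ≤ Real.sqrt (2 ^ n) * q ^ (Us.length + 1) := by
    intro i
    refine (norm_trace_mul_le_sqrt_pauliNormSq ρ i).trans ?_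
    calc Real.sqrt (pauliNormSq σ ρ) ≤ Real.sqrt ((q ^ 2) ^ (Us.length + 1) * 2 ^ n) := by
          gcongr; nlinarith [pow_nonneg (sq_nonneg q) (Us.length + 1)]
      _ = Real.sqrt (2 ^ n) * q ^ (Us.length + 1) := by
          rw [← pow_mul, mul_comm 2, pow_mul, Real.sqrt_mul' _ (by positivity),
            Real.sqrt_sq (by positivity), mul_comm]
  have hOtr : O.trace = 0 := by simp [hO, Matrix.trace_sum, htraceless]
  have hcost : (Otilde * ρ).trace = ∑ i, ((qM ^ w i * ω i : ℝ) : ℂ) * (σ i * ρ).trace := by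
    simp [hOtilde, Finset.sum_mul, Matrix.trace_sum]
  rw [hOtr, zero_div, sub_zero, hcost, mul_assoc _ (Real.sqrt _)]
  exact norm_sum_damped_le hqM0 hqM1 hwsupp hcoeff

/-- Combined cost-and-measurement-noise concentration: with `L` noisy layers of
Pauli noise of strength `q` on a pure input and additional local symmetric
bit-flip measurement noise of parameter `q_M` (mapping `ωᵢ ↦ q_M^{w(i)}ωᵢ`),
the noisy cost satisfies `|C̃ − Tr[O]/2ⁿ| ≤ q_M^w N_O ‖ω⃗‖∞ 2^{n/2} q^{L+1}`. -/
theorem stmt_15 {n : ℕ} {ι : Type*} [Fintype ι] [DecidableEq ι]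
    (hcard : Fintype.card ι = 4^n - 1)
    (σ : ι → Matrix (Fin (2^n)) (Fin (2^n)) ℂ)
    (hherm : ∀ i, (σ i).IsHermitian)
    (htraceless : ∀ i, (σ i).trace = 0)
    (horth : ∀ i j, (σ i * σ j).trace = if i = j then ((2^n : ℕ) : ℂ) else 0)
    (q : ℝ) (hq0 : 0 ≤ q) (hq1 : q < 1)
    (Nc : Matrix (Fin (2^n)) (Fin (2^n)) ℂ →ₗ[ℂ] Matrix (Fin (2^n)) (Fin (2^n)) ℂ)
    (c : ι → ℝ) (hN1 : Nc 1 = 1) (hNσ : ∀ i, Nc (σ i) = (c i : ℂ) • σ i)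
    (hc : ∀ i, |c i| ≤ q)
    (Us : List (Matrix (Fin (2^n)) (Fin (2^n)) ℂ))
    (hUs : ∀ V ∈ Us, V ∈ Matrix.unitaryGroup (Fin (2^n)) ℂ)
    (ρ₀ : Matrix (Fin (2^n)) (Fin (2^n)) ℂ)
    (hρ₀psd : ρ₀.PosSemidef) (hρ₀tr : ρ₀.trace = 1)
    (hρ₀pure : (ρ₀ * ρ₀).trace = 1)
    -- measurement noise: each Pauli coefficient `ωᵢ` of the observable is
    -- multiplied by `q_M^{w i}` where `w i` is the weight of the string
    (qM : ℝ) (hqM0 : 0 ≤ qM) (hqM1 : qM ≤ 1)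
    (w : ι → ℕ) (wmin : ℕ)
    (ω : ι → ℝ) (hwsupp : ∀ i, ω i ≠ 0 → wmin ≤ w i)
    (O Otilde : Matrix (Fin (2^n)) (Fin (2^n)) ℂ)
    (hO : O = ∑ i, (ω i : ℂ) • σ i)
    (hOtilde : Otilde = ∑ i, ((qM ^ (w i) * ω i : ℝ) : ℂ) • σ i) :
    ‖(Otilde * runCircuit Nc Us ρ₀).trace - O.trace / ((2^n : ℕ) : ℂ)‖
      ≤ qM ^ wmin * ((Finset.univ.filter (fun i => ω i ≠ 0)).card : ℝ)
        * (⨆ i, |ω i|) * Real.sqrt (2^n) * q ^ (Us.length + 1) :=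
  stmt_15_general hcard σ hherm htraceless horth q hq0 Nc c hN1 hNσ hc Us hUs ρ₀ hρ₀psd hρ₀tr
    hρ₀pure qM hqM0 hqM1 w wmin ω hwsupp O Otilde hO hOtilde
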